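/- arXiv:2410.19186 — 4 statements merged into one kernel-verified Lean document; each statement's English description precedes it below -/
import Mathlib

section
/- For every positive integer m there exist real polynomials P and Q with Q not identically zero such that for every real number x with Q(x) ≠ 0 and x^2 − x − 1 ≠ 0, the function P/Q is differentiable at x with derivative (x^2 + 4x − 1)^{2m−1} / (x^2 − x − 1)^{2m}; and likewise there exist real polynomials P' and Q' with Q' not identically zero such that for every real x with Q'(x) ≠ 0 and x^2 + 4x − 1 ≠ 0, the function P'/Q' is differentiable at x with derivative (x^2 − x − 1)^{2m−1} / (x^2 + 4x − 1)^{2m}. -/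
open Polynomial Finset

/-- If `z * (b+c)' = 2b+2c` then `(b+c)^j` has "weight" `2j`. -/
private lemma aux_pow_deriv (b c z : ℝ[X]) (hc : derivative c = 0)
    (h2 : z * derivative b = 2*b + 2*c) (j : ℕ) :
    z * derivative ((b+c)^j) = (2*(j:ℝ[X])) * (b+c)^j := by
  induction j with
  | zero => simp
  | succ j ih =>
    rw [pow_succ, derivative_mul, derivative_add, hc, add_zero]
    push_cast
    linear_combination (b+c) * ih + (b+c)^j * h2

/-- Key inductive construction of antiderivatives. -/
private lemma aux_key (a b c z : ℝ[X]) (hz : derivative z = 1) (hc : derivative c = 0)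
    (h1 : z * derivative a = a + b) (h2 : z * derivative b = 2*b + 2*c)
    (h3 : z * z = b + c) (j : ℕ) : ∀ i : ℕ, ∃ N : ℝ[X],
      derivative N * a
        = (2*(j:ℝ[X]) + (i:ℝ[X]) + 1) * (derivative a * N) + b * (b+c)^j * (b+2*c)^i := by
  intro i; induction i with
  | zero =>
    refine ⟨C (-(2*(j:ℝ)+1)⁻¹) * (z * (b+c)^j), ?_⟩
    have hK : (2*(j:ℝ[X]) + 1) * C (-(2*(j:ℝ)+1)⁻¹) = -1 := by
      have : (2*(j:ℝ[X]) + 1) = C (2*(j:ℝ)+1) := by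
        simp [C_add, C_mul, C_eq_natCast, map_ofNat]
      rw [this, ← C_mul, show (2*(j:ℝ)+1) * -(2*(j:ℝ)+1)⁻¹ = (-1:ℝ) from by
        field_simp]
      simp
    rw [derivative_C_mul, derivative_mul, hz, aux_pow_deriv b c z hc h2 j]
    linear_combination (-(b*(b+c)^j)) * hK + (-((2*(j:ℝ[X])+1) * C (-(2*(j:ℝ)+1)⁻¹) * (b+c)^j)) * h1
  | succ i ih =>
    obtain ⟨N₁, ihN⟩ := ih
    set s : ℝ[X] := C ((2*(j:ℝ)+(i:ℝ)+2)⁻¹) with hs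
    refine ⟨s * ((((i:ℝ[X])+1)) * (a*N₁) - z*(b+c)^j*(b+2*c)^(i+1)), ?_⟩
    have hCC : (2*(j:ℝ[X]) + (i:ℝ[X]) + 2) * s = 1 := by
      have : (2*(j:ℝ[X]) + (i:ℝ[X]) + 2) = C (2*(j:ℝ)+(i:ℝ)+2) := by
        simp [C_add, C_mul, C_eq_natCast, map_ofNat]
      rw [this, hs, ← C_mul, mul_inv_cancel₀ (by positivity)]
      simp
    have hder2 : derivative (2*c) = 0 := by
      rw [derivative_mul, hc]; simp
    rw [derivative_C_mul, derivative_sub, derivative_mul, derivative_mul, derivative_mul,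
      derivative_mul, hz, aux_pow_deriv b c z hc h2 j, derivative_pow, derivative_add,
      derivative_natCast, derivative_one, derivative_add, hder2]
    simp only [Nat.add_sub_cancel, zero_add, add_zero, zero_mul, mul_zero, C_eq_natCast]
    push_cast
    linear_combination (s*((i:ℝ[X])+1)*a) * ihN
      - (s*((i:ℝ[X])+1)*(b+c)^j*(b+2*c)^i*a) * h2
      + ((b+c)^j*(b+2*c)^(i+1)) * h1
      + ((z*derivative a - a)*(b+c)^j*(b+2*c)^(i+1)) * hCC

/-- Combined antiderivative of `b^(2n+1)/a^(2n+2)`. -/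
private lemma aux_main (a b c z : ℝ[X]) (hz : derivative z = 1) (hc : derivative c = 0)
    (h1 : z * derivative a = a + b) (h2 : z * derivative b = 2*b + 2*c)
    (h3 : z * z = b + c) (n : ℕ) : ∃ N : ℝ[X],
      derivative N * a = (2*(n:ℝ[X]) + 1) * (derivative a * N) + b^(2*n+1) := by
  choose F hF using aux_key a b c z hz hc h1 h2 h3
  refine ⟨∑ j ∈ range (n+1), ((n.choose j : ℝ[X]) * ((-4)*c)^j) * F j (2*(n-j)), ?_⟩
  have hcoef : ∀ j : ℕ, derivative ((n.choose j : ℝ[X]) * ((-4)*c)^j) = 0 := by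
    intro j
    rw [derivative_mul, derivative_natCast, derivative_pow, derivative_mul, hc]
    simp
  rw [map_sum, Finset.sum_mul]
  have hterm : ∀ j ∈ range (n+1),
      derivative ((n.choose j : ℝ[X]) * ((-4)*c)^j * F j (2*(n-j))) * a
        = (2*(n:ℝ[X])+1) * (derivative a * ((n.choose j : ℝ[X]) * ((-4)*c)^j * F j (2*(n-j))))
          + b * ((((-4)*c)*(b+c))^j * ((b+2*c)^2)^(n-j) * (n.choose j : ℝ[X])) := by
    intro j hj
    have hjn : j ≤ n := by simpa using Nat.lt_succ_iff.mp (mem_range.mp hj)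
    have hcast : (2*(j:ℝ[X]) + ((2*(n-j):ℕ):ℝ[X]) + 1) = 2*(n:ℝ[X]) + 1 := by
      push_cast [Nat.cast_sub hjn]; ring
    have h := hF j (2*(n-j))
    rw [hcast] at h
    rw [derivative_mul, hcoef j, zero_mul, zero_add]
    rw [pow_mul (b+2*c) 2 (n-j)] at h
    calc ((n.choose j : ℝ[X]) * ((-4)*c)^j) * derivative (F j (2*(n-j))) * a
        = ((n.choose j : ℝ[X]) * ((-4)*c)^j) * (derivative (F j (2*(n-j))) * a) := by ring
      _ = ((n.choose j : ℝ[X]) * ((-4)*c)^j) * ((2*(n:ℝ[X])+1) * (derivative a * F j (2*(n-j)))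
            + b * (b+c)^j * ((b+2*c)^2)^(n-j)) := by rw [h]
      _ = _ := by rw [mul_pow (-4*c) (b+c) j]; ring
  rw [Finset.sum_congr rfl hterm, Finset.sum_add_distrib, ← Finset.mul_sum, ← Finset.mul_sum,
    ← Finset.mul_sum, ← add_pow]
  have : ((-4)*c*(b+c) + (b+2*c)^2) = b^2 := by ring
  rw [this, ← pow_mul]
  ring

/-- Analytic wrap-up. -/
private lemma aux_wrap (a b N : ℝ[X]) (K : ℕ)
    (hN : derivative N * a = (2*(K:ℝ[X]) + 1) * (derivative a * N) + b^(2*K+1))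
    (x : ℝ) (ha : a.eval x ≠ 0) :
    HasDerivAt (fun y : ℝ => N.eval y / (a^(2*K+1)).eval y)
      ((b.eval x)^(2*K+1) / (a.eval x)^(2*K+2)) x := by
  have h1 : HasDerivAt (fun y : ℝ => N.eval y) ((derivative N).eval x) x := N.hasDerivAt x
  have h2 : HasDerivAt (fun y : ℝ => (a^(2*K+1)).eval y) ((derivative (a^(2*K+1))).eval x) x :=
    (a^(2*K+1)).hasDerivAt x
  have hne : (a^(2*K+1)).eval x ≠ 0 := by
    simpa [eval_pow] using pow_ne_zero (2*K+1) ha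
  have h3 := h1.div h2 hne
  convert h3 using 1
  case e'_4 => rfl
  case e'_5 => rfl
  case e'_8 => rfl
  have hev : (derivative N).eval x * a.eval x
      = (2*(K:ℝ) + 1) * ((derivative a).eval x * N.eval x) + (b.eval x)^(2*K+1) := by
    have := congrArg (eval x) hN
    simpa [eval_mul, eval_add, eval_pow] using this
  rw [derivative_pow]
  simp only [eval_pow, eval_mul, eval_natCast, eval_C]
  rw [show 2*K+1-1 = 2*K from rfl]
  rw [div_eq_div_iff (by positivity) (by positivity)]
  push_cast
  linear_combination (-((a.eval x)^(2*K) * (a.eval x)^(2*K+2))) * hev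

theorem stmt_15 (m : ℕ) (hm : 0 < m) :
    (∃ P Q : Polynomial ℝ, Q ≠ 0 ∧
      ∀ x : ℝ, Q.eval x ≠ 0 → x ^ 2 - x - 1 ≠ 0 →
        HasDerivAt (fun y : ℝ => P.eval y / Q.eval y)
          ((x ^ 2 + 4 * x - 1) ^ (2 * m - 1) / (x ^ 2 - x - 1) ^ (2 * m)) x) ∧
    (∃ P' Q' : Polynomial ℝ, Q' ≠ 0 ∧
      ∀ x : ℝ, Q'.eval x ≠ 0 → x ^ 2 + 4 * x - 1 ≠ 0 →
        HasDerivAt (fun y : ℝ => P'.eval y / Q'.eval y)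
          ((x ^ 2 - x - 1) ^ (2 * m - 1) / (x ^ 2 + 4 * x - 1) ^ (2 * m)) x) := by
  obtain ⟨n, rfl⟩ : ∃ n, m = n + 1 := ⟨m - 1, by omega⟩
  have hexp1 : 2 * (n+1) - 1 = 2*n+1 := by omega
  have hexp2 : 2 * (n+1) = 2*n+2 := by omega
  constructor
  · -- first integral : a = X²-X-1, b = X²+4X-1, z = X+2, c = 5
    set a : ℝ[X] := X^2 - X - 1 with hadef
    set b : ℝ[X] := X^2 + 4*X - 1 with hbdef
    have hz : derivative ((X:ℝ[X]) + 2) = 1 := by simp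
    have hc : derivative (5 : ℝ[X]) = 0 := by simp
    have h1 : ((X:ℝ[X])+2) * derivative a = a + b := by
      rw [hadef, hbdef]
      simp [derivative_sub, derivative_X_pow, map_ofNat]; ring
    have h2 : ((X:ℝ[X])+2) * derivative b = 2*b + 2*5 := by
      rw [hbdef]
      simp [derivative_sub, derivative_add, derivative_mul, derivative_X_pow, map_ofNat]; ring
    have h3 : ((X:ℝ[X])+2) * ((X:ℝ[X])+2) = b + 5 := by rw [hbdef]; ring
    obtain ⟨N, hN⟩ := aux_main a b 5 (X+2) hz hc h1 h2 h3 n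
    refine ⟨N, a^(2*n+1), ?_, ?_⟩
    · apply pow_ne_zero
      intro h
      have := congrArg (eval 0) h
      simp [hadef] at this
    · intro x hQ hx
      have ha : a.eval x ≠ 0 := by
        intro h; apply hQ; simp [eval_pow, h]
      have := aux_wrap a b N n hN x ha
      rw [hexp1, hexp2]
      convert this using 2 <;> simp [hadef, hbdef]
  · -- second integral : a = X²+4X-1, b = X²-X-1, z = X - 1/2, c = 5/4
    set a : ℝ[X] := X^2 + 4*X - 1 with hadef
    set b : ℝ[X] := X^2 - X - 1 with hbdef
    have hCa : (2:ℝ[X]) * C (1/2) = 1 := by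
      rw [show (2:ℝ[X]) = C 2 from (map_ofNat _ 2).symm, ← C_mul]; norm_num
    have hz : derivative ((X:ℝ[X]) - C (1/2)) = 1 := by simp
    have hc : derivative (C (5/4) : ℝ[X]) = 0 := by simp
    have h1 : ((X:ℝ[X]) - C (1/2)) * derivative a = a + b := by
      rw [hadef, hbdef]
      simp only [derivative_sub, derivative_add, derivative_mul, derivative_X_pow, derivative_X,
        derivative_one, derivative_ofNat, C_eq_natCast, map_ofNat, Nat.cast_ofNat]
      linear_combination (-(X:ℝ[X])-2) * hCa
    have h2 : ((X:ℝ[X]) - C (1/2)) * derivative b = 2*b + 2*(C (5/4)) := by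
      have hb2 : (2:ℝ[X]) * C (5/4) = C (1/2) + 2 := by
        rw [show (2:ℝ[X]) = C 2 from (map_ofNat _ 2).symm, ← C_mul, ← C_add]
        exact congrArg C (by norm_num)
      rw [hbdef]
      simp only [derivative_sub, derivative_X_pow, derivative_X, derivative_one, C_eq_natCast,
        map_ofNat, Nat.cast_ofNat]
      linear_combination -(X:ℝ[X]) * hCa - hb2
    have h3 : ((X:ℝ[X]) - C (1/2)) * ((X:ℝ[X]) - C (1/2)) = b + C (5/4) := by
      have hcc : C (1/2:ℝ) * C (1/2) - C (5/4) = -1 := by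
        rw [← C_mul, ← C_sub]; norm_num
      rw [hbdef]
      linear_combination -(X:ℝ[X]) * hCa + hcc
    obtain ⟨N, hN⟩ := aux_main a b (C (5/4)) (X - C (1/2)) hz hc h1 h2 h3 n
    refine ⟨N, a^(2*n+1), ?_, ?_⟩
    · apply pow_ne_zero
      intro h
      have := congrArg (eval 0) h
      simp [hadef] at this
    · intro x hQ hx
      have ha : a.eval x ≠ 0 := by
        intro h; apply hQ; simp [eval_pow, h]
      have := aux_wrap a b N n hN x ha
      rw [hexp1, hexp2]
      convert this using 2 <;> simp [hadef, hbdef]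
end

section
/- For every positive integer m, the derivative with respect to x of the function x ↦ ∑_{j=0}^{m} C(2m+1, j) · (−1)^{j+1} / (2m+1−2j) · (x^{−(2m+1−2j)} + x^{2m+1−2j}) equals (1 − x^2)^{2m+1} / x^{2m+2} at every real x ≠ 0. -/
open Finset

theorem stmt_16 (m : ℕ) (hm : 0 < m) (x : ℝ) (hx : x ≠ 0) :
    HasDerivAt (fun y : ℝ => ∑ j ∈ Finset.range (m + 1),
        (Nat.choose (2 * m + 1) j : ℝ) * (-1 : ℝ) ^ (j + 1) / (2 * (m : ℝ) + 1 - 2 * (j : ℝ)) *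
          (y ^ (-(2 * (m : ℤ) + 1 - 2 * (j : ℤ))) + y ^ (2 * (m : ℤ) + 1 - 2 * (j : ℤ))))
      ((1 - x ^ 2) ^ (2 * m + 1) / x ^ (2 * m + 2)) x := by
  set g : ℕ → ℝ := fun i =>
    (Nat.choose (2 * m + 1) i : ℝ) * (-1 : ℝ) ^ i * x ^ (2 * (i : ℤ) - 2 * (m : ℤ) - 2)
    with hg
  have hsum : HasDerivAt (fun y : ℝ => ∑ j ∈ Finset.range (m + 1),
      (Nat.choose (2 * m + 1) j : ℝ) * (-1 : ℝ) ^ (j + 1) / (2 * (m : ℝ) + 1 - 2 * (j : ℝ)) *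
        (y ^ (-(2 * (m : ℤ) + 1 - 2 * (j : ℤ))) + y ^ (2 * (m : ℤ) + 1 - 2 * (j : ℤ))))
      (∑ j ∈ Finset.range (m + 1), (g (2 * m + 1 - j) + g j)) x := by
    apply HasDerivAt.fun_sum
    intro j hj
    have hjm : j ≤ m := Nat.lt_succ_iff.mp (Finset.mem_range.mp hj)
    have h1 := ((hasDerivAt_zpow (-(2 * (m : ℤ) + 1 - 2 * (j : ℤ))) x (Or.inl hx)).fun_add
      (hasDerivAt_zpow (2 * (m : ℤ) + 1 - 2 * (j : ℤ)) x (Or.inl hx))).const_mul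
      ((Nat.choose (2 * m + 1) j : ℝ) * (-1 : ℝ) ^ (j + 1) / (2 * (m : ℝ) + 1 - 2 * (j : ℝ)))
    convert h1 using 1
    · rfl
    have hjr : (j : ℝ) ≤ (m : ℝ) := by exact_mod_cast hjm
    have hK : (2 * (m : ℝ) + 1 - 2 * (j : ℝ)) ≠ 0 :=
      (by linarith : (0:ℝ) < 2 * (m : ℝ) + 1 - 2 * (j : ℝ)).ne'
    have hchoose : (Nat.choose (2 * m + 1) (2 * m + 1 - j) : ℝ) = Nat.choose (2 * m + 1) j := by
      rw [Nat.choose_symm (by omega)]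
    have hpow : ((-1 : ℝ)) ^ (2 * m + 1 - j) = (-1 : ℝ) ^ (j + 1) := by
      rw [show 2 * m + 1 - j = 2 * (m - j) + (j + 1) by omega, pow_add, pow_mul, neg_one_sq,
        one_pow, one_mul]
    have hcast : ((2 * m + 1 - j : ℕ) : ℤ) = 2 * (m : ℤ) + 1 - j := by omega
    have he1 : 2 * ((2 * m + 1 - j : ℕ) : ℤ) - 2 * (m : ℤ) - 2
        = (2 * (m : ℤ) + 1 - 2 * (j : ℤ)) - 1 := by omega
    have he2 : 2 * (j : ℤ) - 2 * (m : ℤ) - 2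
        = -(2 * (m : ℤ) + 1 - 2 * (j : ℤ)) - 1 := by ring
    have hKc : ((2 * (m : ℤ) + 1 - 2 * (j : ℤ) : ℤ) : ℝ) = 2 * (m : ℝ) + 1 - 2 * (j : ℝ) := by
      push_cast; ring
    simp only [hg, hchoose, hpow, he1, he2]
    rw [Int.cast_neg, hKc]
    set A := x ^ ((2 * (m : ℤ) + 1 - 2 * (j : ℤ)) - 1) with hA
    set B := x ^ (-(2 * (m : ℤ) + 1 - 2 * (j : ℤ)) - 1) with hB
    rw [pow_succ]
    field_simp
    ring
  convert hsum using 1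
  have split : ∑ j ∈ Finset.range (m + 1), (g (2 * m + 1 - j) + g j)
      = ∑ i ∈ Finset.range (2 * m + 2), g i := by
    rw [Finset.sum_add_distrib]
    have h2 : ∑ j ∈ Finset.range (m + 1), g (2 * m + 1 - j)
        = ∑ j ∈ Finset.range (m + 1), g (m + 1 + j) := by
      rw [← Finset.sum_range_reflect (fun i => g (m + 1 + i)) (m + 1)]
      apply Finset.sum_congr rfl
      intro j hj
      have hjm : j ≤ m := Nat.lt_succ_iff.mp (Finset.mem_range.mp hj)
      congr 1
      omega
    rw [h2]
    conv_rhs => rw [show 2 * m + 2 = (m + 1) + (m + 1) by ring, Finset.sum_range_add]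
    rw [add_comm]
  rw [split]
  rw [show (1 - x ^ 2) = -x ^ 2 + 1 by ring, add_pow, Finset.sum_div]
  apply Finset.sum_congr rfl
  intro i hi
  have he : 2 * (i : ℤ) - 2 * (m : ℤ) - 2 = ((2 * i : ℕ) : ℤ) - ((2 * m + 2 : ℕ) : ℤ) := by
    push_cast; ring
  simp only [hg, he, one_pow, mul_one]
  rw [zpow_sub₀ hx, zpow_natCast, zpow_natCast, neg_pow, pow_mul]
  field_simp
end

section
/- Let n be a positive integer and z a complex number, and set g(z) = ∑_{t=0}^{n} C(t+n, t) · (−1/2)^t · (1+z)^t · ∑_{s=0}^{n−t} C(n, s) · C(n, s+t) · z^s. Then g(z) = 0 if n is odd, and g(z) = ((−1)^{n/2} / 2^n) · C(n, n/2) · (z − 1)^n if n is even. -/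
open Polynomial Finset

lemma Tsum (n m : ℕ) (x : ℂ) :
    ∑ t ∈ Finset.range (m + 1),
      ((n + t).choose t : ℂ) * ((n + m).choose (n + t) : ℂ) * ((-1) ^ (m - t) * x ^ t * x ^ (m - t))
      = if m = 0 then 1 else 0 := by
  have h : ∀ t ∈ Finset.range (m + 1),
      ((n + t).choose t : ℂ) * ((n + m).choose (n + t) : ℂ) * ((-1) ^ (m - t) * x ^ t * x ^ (m - t))
      = ((n + m).choose n : ℂ) * (m.choose t : ℂ) * ((-1)^m * (-1)^t) * x ^ m := by
    intro t ht
    rw [Finset.mem_range] at ht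
    have htm : t ≤ m := Nat.lt_succ_iff.mp ht
    have hc : (n + m).choose (n + t) * (n + t).choose n = (n + m).choose n * m.choose t := by
      have := Nat.choose_mul (n := n + m) (k := n + t) (s := n)
        (by omega)
      simpa using this
    have hc2 : (n + t).choose t = (n + t).choose n := by rw [Nat.add_comm]; exact Nat.choose_symm_add
    have hsgn : ((-1 : ℂ)) ^ (m - t) = (-1)^m * (-1)^t := by
      have : ((-1 : ℂ)) ^ (m - t) * (-1)^t = (-1)^m := by
        rw [← pow_add]; congr 1; omega
      have h2 : ((-1:ℂ))^t * (-1)^t = 1 := by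
        rw [← mul_pow]; simp
      calc ((-1 : ℂ)) ^ (m - t) = ((-1 : ℂ)) ^ (m - t) * ((-1:ℂ)^t * (-1)^t) := by rw [h2, mul_one]
        _ = ((-1 : ℂ)) ^ (m - t) * (-1:ℂ)^t * (-1)^t := by ring
        _ = (-1)^m * (-1)^t := by rw [this]
    have hx : x ^ t * x ^ (m - t) = x ^ m := by
      rw [← pow_add]; congr 1; omega
    calc ((n + t).choose t : ℂ) * ((n + m).choose (n + t) : ℂ) * ((-1) ^ (m - t) * x ^ t * x ^ (m - t))
        = (((n + m).choose (n + t) * (n + t).choose n : ℕ) : ℂ) * ((-1) ^ (m-t) * (x ^ t * x ^ (m - t))) := by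
          push_cast [hc2]; ring
      _ = ((n + m).choose n : ℂ) * (m.choose t : ℂ) * ((-1)^m * (-1)^t) * x ^ m := by
          rw [hc, hsgn, hx]; push_cast; ring
  rw [Finset.sum_congr rfl h]
  have halt : ∑ t ∈ Finset.range (m + 1), ((-1:ℂ))^t * (m.choose t : ℂ) = if m = 0 then 1 else 0 := by
    have := Int.alternating_sum_range_choose (n := m)
    have := congrArg (fun k : ℤ => (k : ℂ)) this
    push_cast at this
    simpa using this
  calc ∑ t ∈ Finset.range (m + 1), ((n + m).choose n : ℂ) * (m.choose t : ℂ) * ((-1)^m * (-1)^t) * x ^ m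
      = ((n + m).choose n : ℂ) * (-1)^m * x^m * ∑ t ∈ Finset.range (m + 1), ((-1:ℂ))^t * (m.choose t : ℂ) := by
        rw [Finset.mul_sum]; apply Finset.sum_congr rfl; intro t _; ring
    _ = if m = 0 then 1 else 0 := by
        rw [halt]
        rcases eq_or_ne m 0 with rfl | hm
        · simp
        · simp [hm]

lemma Acoeff (n t : ℕ) (ht : t ≤ n) (z : ℂ) :
    ((X + C 1) ^ n * (X + C z) ^ n : ℂ[X]).coeff (n + t)
      = ∑ s ∈ Finset.range (n - t + 1),
          (n.choose s : ℂ) * (n.choose (s + t) : ℂ) * z ^ s := by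
  rw [Polynomial.coeff_mul, Finset.Nat.sum_antidiagonal_eq_sum_range_succ_mk]
  have hsub : Finset.Ico t (n + 1) ⊆ Finset.range (n + t + 1) := by
    intro k hk
    rw [Finset.mem_Ico] at hk
    rw [Finset.mem_range]
    omega
  rw [← Finset.sum_subset hsub]
  · rw [Finset.sum_Ico_eq_sum_range]
    have hlen : n + 1 - t = n - t + 1 := by omega
    rw [hlen]
    apply Finset.sum_congr rfl
    intro s hs
    rw [Finset.mem_range] at hs
    have hs' : s ≤ n - t := by omega
    rw [coeff_X_add_C_pow, coeff_X_add_C_pow]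
    have h1 : n + t - (t + s) = n - s := by omega
    have h2 : n - (n - s) = s := by omega
    have h3 : (n.choose (n - s) : ℂ) = (n.choose s : ℂ) := by
      congr 1
      exact Nat.choose_symm (by omega)
    rw [h1, h2, h3]
    rw [Nat.add_comm t s]
    push_cast
    ring
  · intro k hk hk2
    rw [Finset.mem_range] at hk
    rw [Finset.mem_Ico] at hk2
    rw [coeff_X_add_C_pow, coeff_X_add_C_pow]
    rcases (not_and_or.mp hk2) with h | h
    · push_neg at h
      have : n.choose (n + t - k) = 0 := Nat.choose_eq_zero_of_lt (by omega)
      rw [this]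
      simp
    · push_neg at h
      have : n.choose k = 0 := Nat.choose_eq_zero_of_lt (by omega)
      rw [this]
      simp

lemma Tj (n j : ℕ) (hj : j ≤ n) (x : ℂ) :
    ∑ t ∈ Finset.range (n + 1),
      ((n + t).choose t : ℂ) * x ^ t * (((X + C (-x)) ^ (2 * j) : ℂ[X]).coeff (n + t))
      = if 2 * j = n then 1 else 0 := by
  by_cases hc : n ≤ 2 * j
  · set m := 2 * j - n with hm
    have h2j : 2 * j = n + m := by omega
    have hmn : m ≤ n := by omega
    have hsub : Finset.range (m + 1) ⊆ Finset.range (n + 1) := by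
      intro k hk; rw [Finset.mem_range] at *; omega
    rw [← Finset.sum_subset hsub]
    · have heq : ∀ t ∈ Finset.range (m + 1),
          ((n + t).choose t : ℂ) * x ^ t * (((X + C (-x)) ^ (2 * j) : ℂ[X]).coeff (n + t))
          = ((n + t).choose t : ℂ) * ((n + m).choose (n + t) : ℂ) *
              ((-1) ^ (m - t) * x ^ t * x ^ (m - t)) := by
        intro t ht
        rw [Finset.mem_range] at ht
        rw [coeff_X_add_C_pow, h2j]
        have h1 : n + m - (n + t) = m - t := by omega
        rw [h1, neg_pow]
        ring
      rw [Finset.sum_congr rfl heq, Tsum n m x]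
      by_cases hm0 : m = 0
      · rw [if_pos hm0, if_pos (by omega)]
      · rw [if_neg hm0, if_neg (by omega)]
    · intro t ht ht2
      rw [Finset.mem_range] at ht
      rw [Finset.mem_range] at ht2
      rw [coeff_X_add_C_pow]
      have : (2 * j).choose (n + t) = 0 := Nat.choose_eq_zero_of_lt (by omega)
      rw [this]
      simp
  · rw [if_neg (by omega)]
    apply Finset.sum_eq_zero
    intro t ht
    rw [coeff_X_add_C_pow]
    have : (2 * j).choose (n + t) = 0 := Nat.choose_eq_zero_of_lt (by omega)
    rw [this]
    simp

theorem stmt_18 (n : ℕ) (hn : 0 < n) (z : ℂ) :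
    (∑ t ∈ Finset.range (n + 1),
        (Nat.choose (t + n) t : ℂ) * (-1 / 2 : ℂ) ^ t * (1 + z) ^ t *
          ∑ s ∈ Finset.range (n - t + 1),
            (Nat.choose n s : ℂ) * (Nat.choose n (s + t) : ℂ) * z ^ s)
      = if Even n then
          ((-1) ^ (n / 2) / 2 ^ n) * (Nat.choose n (n / 2) : ℂ) * (z - 1) ^ n
        else 0 := by
  set x : ℂ := -(1 + z) / 2 with hxdef
  set a : ℂ := (1 - z) / 2 with hadef
  -- polynomial factorization
  have hP : ((X + C 1) * (X + C z) : ℂ[X]) = (X + C (-x)) ^ 2 + C (-a ^ 2) := by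
    have e1 : C ((1 : ℂ) + z) = C (-(2 * x)) := by
      congr 1
      rw [hxdef]; ring
    have e2 : C z = C (x ^ 2 - a ^ 2) := by
      congr 1
      rw [hxdef, hadef]; ring
    have expand : ((X + C 1) * (X + C z) : ℂ[X]) = X ^ 2 + C (1 + z) * X + C z := by
      simp only [map_add, map_one]
      ring
    rw [expand, e1, e2]
    simp only [map_sub, map_mul, map_pow, map_neg, map_add, map_ofNat]
    ring
  -- rewrite summands
  have hstep : ∀ t ∈ Finset.range (n + 1),
      (Nat.choose (t + n) t : ℂ) * (-1 / 2 : ℂ) ^ t * (1 + z) ^ t *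
          ∑ s ∈ Finset.range (n - t + 1),
            (Nat.choose n s : ℂ) * (Nat.choose n (s + t) : ℂ) * z ^ s
      = ∑ j ∈ Finset.range (n + 1),
          ((n + t).choose t : ℂ) * x ^ t *
            (((X + C (-x)) ^ (2 * j) : ℂ[X]).coeff (n + t)) *
              ((-a ^ 2) ^ (n - j) * (n.choose j : ℂ)) := by
    intro t ht
    rw [Finset.mem_range] at ht
    have ht' : t ≤ n := by omega
    rw [Nat.add_comm t n, ← Acoeff n t ht' z]
    have hx : (-1 / 2 : ℂ) ^ t * (1 + z) ^ t = x ^ t := by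
      rw [← mul_pow]; congr 1; rw [hxdef]; ring
    have hPn : ((X + C 1) ^ n * (X + C z) ^ n : ℂ[X])
        = ∑ j ∈ Finset.range (n + 1),
            (X + C (-x)) ^ (2 * j) * C ((-a ^ 2) ^ (n - j) * (n.choose j : ℂ)) := by
      rw [← mul_pow, hP, add_pow]
      apply Finset.sum_congr rfl
      intro j _
      rw [← pow_mul, map_mul, ← C_pow]
      rw [Polynomial.C_eq_natCast]
      ring
    rw [hPn, Polynomial.finset_sum_coeff]
    rw [Finset.mul_sum]
    apply Finset.sum_congr rfl
    intro j _
    rw [Polynomial.coeff_mul_C, ← hx]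
    ring
  rw [Finset.sum_congr rfl hstep]
  rw [Finset.sum_comm]
  have hinner : ∀ j ∈ Finset.range (n + 1),
      ∑ t ∈ Finset.range (n + 1),
        ((n + t).choose t : ℂ) * x ^ t *
          (((X + C (-x)) ^ (2 * j) : ℂ[X]).coeff (n + t)) *
            ((-a ^ 2) ^ (n - j) * (n.choose j : ℂ))
      = (if 2 * j = n then 1 else 0) * ((-a ^ 2) ^ (n - j) * (n.choose j : ℂ)) := by
    intro j hj
    rw [Finset.mem_range] at hj
    rw [← Finset.sum_mul, Tj n j (by omega) x]
  rw [Finset.sum_congr rfl hinner]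
  by_cases hev : Even n
  · rw [if_pos hev]
    obtain ⟨k, hk⟩ := hev
    have hk2 : n = 2 * k := by omega
    have hhalf : n / 2 = k := by omega
    rw [Finset.sum_eq_single k]
    · rw [if_pos (by omega)]
      have h1 : n - k = k := by omega
      rw [h1, one_mul, hhalf]
      have h2 : ((-a ^ 2) : ℂ) ^ k = (-1) ^ k * a ^ n := by
        rw [neg_pow, ← pow_mul]
        congr 2
        omega
      rw [h2, hadef]
      have h3 : ((1 - z) / 2 : ℂ) ^ n = (z - 1) ^ n / 2 ^ n := by
        rw [div_pow]
        congr 1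
        rw [← neg_sub z 1, neg_pow]
        rw [hk2, pow_mul]
        simp
      rw [h3]
      ring
    · intro j hj hjk
      rw [if_neg (by omega), zero_mul]
    · intro h
      exact absurd (Finset.mem_range.mpr (by omega)) h
  · rw [if_neg hev]
    apply Finset.sum_eq_zero
    intro j hj
    have : ¬ (2 * j = n) := by
      intro h
      exact hev ⟨j, by omega⟩
    rw [if_neg this, zero_mul]
end

section
/- Let n be a positive integer and let a, b be nonzero complex numbers with a ≠ b and a + b ≠ 0. Then the n-th derivative of the function x ↦ (x − a)^n (x − b)^n / x^{n+1}, evaluated at x = 2ab/(a+b), equals 0 if n is odd, and equals (−1)^{n/2} · (a − b)^n · ((a+b)/(2ab))^{n+1} · (1·3·5···(n−1))^2 if n is even. -/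
open Polynomial Topology Filter

-- iteratedDerivWithin on open set = iteratedDeriv
lemma itDW_open {n : ℕ} {f : ℂ → ℂ} {s : Set ℂ} (hs : IsOpen s) {x : ℂ} (hx : x ∈ s) :
    iteratedDerivWithin n f s x = iteratedDeriv n f x := by
  rw [iteratedDerivWithin, iteratedDeriv, iteratedFDerivWithin_of_isOpen n hs hx]

-- iteratedDeriv of polynomial eval
lemma itD_poly (n : ℕ) (P : Polynomial ℂ) :
    iteratedDeriv n (fun x => P.eval x) = fun x => (Polynomial.derivative^[n] P).eval x := by
  induction n generalizing P with
  | zero => simp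
  | succ n ih =>
    rw [iteratedDeriv_succ']
    have h : deriv (fun x => P.eval x) = fun x => P.derivative.eval x :=
      funext fun x => Polynomial.deriv P
    rw [h, ih, Function.iterate_succ, Function.comp_apply]

lemma contDiffOn_zpow' (n : ℕ) (m : ℤ) :
    ContDiffOn ℂ n (fun x : ℂ => x ^ m) {x : ℂ | x ≠ 0} := by
  rcases m with k | k
  · simpa using (contDiff_id.pow k).contDiffOn
  · have : (fun x : ℂ => x ^ Int.negSucc k) = fun x : ℂ => (x ^ (k + 1))⁻¹ := by
      funext x; rw [zpow_negSucc]
    rw [this]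
    exact ((contDiff_id.pow (k + 1)).contDiffOn).inv fun x hx => pow_ne_zero _ hx

lemma key_lemma (c : ℂ) (hc : c ≠ 0) :
    ∀ (N p : ℕ) (P : Polynomial ℂ) (m : ℤ), N ≤ p →
    iteratedDeriv N (fun x : ℂ => (x - c) ^ p * P.eval x * x ^ m) c =
      if p = N then (N.factorial : ℂ) * P.eval c * c ^ m else 0 := by
  intro N
  induction N with
  | zero =>
    intro p P m _
    rcases Nat.eq_zero_or_pos p with hp | hp
    · subst hp; simp
    · rw [iteratedDeriv_zero]
      simp [sub_self, zero_pow hp.ne', Nat.pos_iff_ne_zero.mp hp]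
  | succ N ih =>
    intro p P m hp
    obtain ⟨q, rfl⟩ : ∃ q, p = q + 1 := ⟨p - 1, by omega⟩
    have hq : N ≤ q := by omega
    set Q : Polynomial ℂ :=
      (C ((q : ℂ) + 1) * X) * P + ((X - C c) * X) * P.derivative
        + C (m : ℂ) * (X - C c) * P with hQ
    have E : deriv (fun x : ℂ => (x - c) ^ (q + 1) * P.eval x * x ^ m)
        =ᶠ[𝓝 c] fun x : ℂ => (x - c) ^ q * Q.eval x * x ^ (m - 1) := by
      filter_upwards [IsOpen.mem_nhds isOpen_ne hc] with x hx
      have h1 : HasDerivAt (fun x : ℂ => (x - c) ^ (q + 1))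
          (((q : ℂ) + 1) * (x - c) ^ q) x := by
        have := ((hasDerivAt_id x).sub_const c).fun_pow (q + 1)
        simpa using this
      have h2 : HasDerivAt (fun x : ℂ => P.eval x) (P.derivative.eval x) x :=
        Polynomial.hasDerivAt P x
      have h3 : HasDerivAt (fun x : ℂ => x ^ m) ((m : ℂ) * x ^ (m - 1)) x :=
        hasDerivAt_zpow m x (Or.inl hx)
      have := ((h1.fun_mul h2).fun_mul h3).deriv
      rw [this]
      have hxm : (x : ℂ) ^ m = x ^ (m - 1) * x := by
        rw [← zpow_add_one₀ hx (m - 1)]; ring_nf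
      rw [hxm]
      simp only [hQ, Polynomial.eval_add, Polynomial.eval_mul, Polynomial.eval_C,
        Polynomial.eval_X, Polynomial.eval_sub]
      ring
    rw [iteratedDeriv_succ', E.iteratedDeriv_eq N, ih q Q (m - 1) hq]
    have hQc : Q.eval c = ((q : ℂ) + 1) * c * P.eval c := by
      simp only [hQ, Polynomial.eval_add, Polynomial.eval_mul, Polynomial.eval_C,
        Polynomial.eval_X, Polynomial.eval_sub, sub_self]
      ring
    by_cases h : q = N
    · subst h
      simp only [if_pos rfl, hQc]
      have : (c : ℂ) ^ m = c ^ (m - 1) * c := by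
        rw [← zpow_add_one₀ hc (m - 1)]; ring_nf
      rw [this]
      push_cast [Nat.factorial_succ]
      ring
    · rw [if_neg h, if_neg (by omega)]

lemma itDW_sum {n : ℕ} {s : Set ℂ} (hs : IsOpen s) {x : ℂ} (hx : x ∈ s)
    (t : Finset ℕ) (F : ℕ → ℂ → ℂ) (hF : ∀ i ∈ t, ContDiffOn ℂ n (F i) s) :
    iteratedDerivWithin n (fun y => ∑ i ∈ t, F i y) s x
      = ∑ i ∈ t, iteratedDerivWithin n (F i) s x := by
  classical
  induction t using Finset.cons_induction with
  | empty =>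
    simp only [Finset.sum_empty]
    rw [iteratedDerivWithin]
    rw [iteratedFDerivWithin_zero_fun]
    simp
  | cons i t hi ih =>
    rw [Finset.sum_cons]
    have h1 : ContDiffOn ℂ n (F i) s := hF i (Finset.mem_cons_self i t)
    have h2 : ∀ j ∈ t, ContDiffOn ℂ n (F j) s := fun j hj => hF j (Finset.mem_cons_of_mem hj)
    have : iteratedDerivWithin n (fun y => F i y + ∑ j ∈ t, F j y) s x
        = iteratedDerivWithin n (F i) s x
          + iteratedDerivWithin n (fun y => ∑ j ∈ t, F j y) s x := by
      have := iteratedDerivWithin_add hx hs.uniqueDiffOn (h1 x hx) (ContDiffOn.sum h2 x hx)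
      simpa [Pi.add_def] using this
    simp only [Finset.sum_cons] at this ⊢
    rw [this, ih h2]

lemma doublefac (m : ℕ) :
    2 ^ m * m.factorial * ∏ i ∈ Finset.range m, (2 * i + 1) = (2 * m).factorial := by
  induction m with
  | zero => simp
  | succ m ih =>
    have h2 : 2 * (m + 1) = (2 * m + 1) + 1 := by omega
    rw [Finset.prod_range_succ, h2, Nat.factorial_succ, Nat.factorial_succ,
      Nat.factorial_succ, ← ih]
    ring

theorem stmt_19 (n : ℕ) (hn : 0 < n) (a b : ℂ) (ha : a ≠ 0) (hb : b ≠ 0) (hab : a ≠ b)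
    (hsum : a + b ≠ 0) :
    iteratedDeriv n (fun x : ℂ => (x - a) ^ n * (x - b) ^ n / x ^ (n + 1))
        (2 * a * b / (a + b)) =
      if Even n then
        (-1) ^ (n / 2) * (a - b) ^ n * ((a + b) / (2 * a * b)) ^ (n + 1) *
          (∏ i ∈ Finset.range (n / 2), (2 * (i : ℂ) + 1)) ^ 2
      else 0 := by
  classical
  set c : ℂ := 2 * a * b / (a + b) with hcdef
  set d : ℂ := (b - a) / (a + b) with hddef
  have h2ab : 2 * a * b ≠ 0 := by
    exact mul_ne_zero (mul_ne_zero two_ne_zero ha) hb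
  have hc : c ≠ 0 := div_ne_zero h2ab hsum
  set s : Set ℂ := {x : ℂ | x ≠ 0} with hsdef
  have hs : IsOpen s := isOpen_ne
  have hcs : c ∈ s := hc
  set B : ℕ → ℂ := fun k => (n.choose k : ℂ) * (-d ^ 2) ^ (n - k) * (a * b / c ^ 2) ^ n with hB
  set F : ℕ → ℂ → ℂ :=
    fun k x => B k * ((x - c) ^ (2 * k) * x ^ ((n : ℤ) - 1 - 2 * k)) with hF
  -- quadratic identity
  have quad : ∀ x : ℂ, (x - a) * (x - b) = (a * b / c ^ 2) * ((x - c) ^ 2 - d ^ 2 * x ^ 2) := by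
    intro x
    rw [hcdef, hddef]
    field_simp
    ring
  -- Step A
  have stepA : ∀ x ∈ s, (x - a) ^ n * (x - b) ^ n / x ^ (n + 1)
      = ∑ k ∈ Finset.range (n + 1), F k x := by
    intro x hx
    have hx : (x : ℂ) ≠ 0 := hx
    have h3 : (x - a) ^ n * (x - b) ^ n
        = ∑ k ∈ Finset.range (n + 1),
            (a * b / c ^ 2) ^ n * (((x - c) ^ 2) ^ k * (-(d ^ 2 * x ^ 2)) ^ (n - k)
              * (n.choose k : ℂ)) := by
      rw [← mul_pow, quad x, mul_pow, sub_eq_add_neg, add_pow, Finset.mul_sum]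
    rw [h3, Finset.sum_div]
    refine Finset.sum_congr rfl fun k hk => ?_
    have hkn : k ≤ n := Nat.lt_succ_iff.mp (Finset.mem_range.mp hk)
    have e1 : (-(d ^ 2 * x ^ 2)) ^ (n - k) = (-d ^ 2) ^ (n - k) * x ^ (2 * (n - k)) := by
      rw [show -(d ^ 2 * x ^ 2) = (-d ^ 2) * x ^ 2 by ring, mul_pow, ← pow_mul]
    have e2 : x ^ (2 * (n - k)) * (x ^ (n + 1))⁻¹ = x ^ ((n : ℤ) - 1 - 2 * k) := by
      rw [← zpow_natCast x (2 * (n - k)), ← zpow_natCast x (n + 1), ← zpow_neg,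
        ← zpow_add₀ hx]
      congr 1
      omega
    rw [e1, div_eq_mul_inv]
    simp only [hF, hB]
    rw [← e2, ← pow_mul]
    ring
  -- ContDiffOn of terms
  have hFc : ∀ k ∈ Finset.range (n + 1), ContDiffOn ℂ n (F k) s := by
    intro k _
    exact contDiffOn_const.mul
      ((((contDiff_id.sub contDiff_const).pow (2 * k)).contDiffOn).mul (contDiffOn_zpow' n _))
  -- reduce to sum of pointwise iterated derivatives
  have hEq : (fun x : ℂ => (x - a) ^ n * (x - b) ^ n / x ^ (n + 1))
      =ᶠ[𝓝 c] fun x => ∑ k ∈ Finset.range (n + 1), F k x := by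
    filter_upwards [hs.mem_nhds hcs] with x hx using stepA x hx
  rw [hEq.iteratedDeriv_eq n, ← itDW_open hs hcs, itDW_sum hs hcs _ F hFc]
  have hsplit : ∀ k ∈ Finset.range (n + 1), iteratedDerivWithin n (F k) s c
      = if 2 * k = n then (n.factorial : ℂ) * B k * c ^ ((n : ℤ) - 1 - 2 * k) else 0 := by
    intro k hk
    rw [itDW_open hs hcs]
    by_cases h2k : n ≤ 2 * k
    · have hFk : F k = fun x =>
          (x - c) ^ (2 * k) * (Polynomial.C (B k)).eval x * x ^ ((n : ℤ) - 1 - 2 * k) := by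
        funext x
        simp only [hF, Polynomial.eval_C]
        ring
      rw [hFk, key_lemma c hc n (2 * k) _ _ h2k]
      simp [Polynomial.eval_C]
    · push_neg at h2k
      have hexp : ((n : ℤ) - 1 - 2 * k) = ((n - 1 - 2 * k : ℕ) : ℤ) := by omega
      have hFk : F k = fun x => (Polynomial.C (B k) * (Polynomial.X - Polynomial.C c) ^ (2 * k)
          * Polynomial.X ^ (n - 1 - 2 * k)).eval x := by
        funext x
        simp only [hF, Polynomial.eval_mul, Polynomial.eval_pow, Polynomial.eval_sub,
          Polynomial.eval_X, Polynomial.eval_C, hexp, zpow_natCast]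
        ring
      have hdeg : (Polynomial.C (B k) * (Polynomial.X - Polynomial.C c) ^ (2 * k)
          * Polynomial.X ^ (n - 1 - 2 * k) : Polynomial ℂ).natDegree < n := by
        have h1 : (Polynomial.C (B k) * (Polynomial.X - Polynomial.C c) ^ (2 * k)
            : Polynomial ℂ).natDegree ≤ 2 * k := by
          refine le_trans Polynomial.natDegree_mul_le ?_
          simp [Polynomial.natDegree_pow, Polynomial.natDegree_X_sub_C]
        have h2 : (Polynomial.C (B k) * (Polynomial.X - Polynomial.C c) ^ (2 * k)
            * Polynomial.X ^ (n - 1 - 2 * k) : Polynomial ℂ).natDegree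
            ≤ 2 * k + (n - 1 - 2 * k) := by
          refine le_trans Polynomial.natDegree_mul_le ?_
          have := Polynomial.natDegree_X_pow (R := ℂ) (n - 1 - 2 * k)
          omega
        omega
      rw [hFk, itD_poly, Polynomial.iterate_derivative_eq_zero hdeg, if_neg (by omega)]
      simp
  rw [Finset.sum_congr rfl hsplit]
  by_cases hev : Even n
  · obtain ⟨m, hm'⟩ := hev
    have hm2 : n = 2 * m := by omega
    subst hm2
    rw [if_pos (even_two_mul m)]
    rw [Finset.sum_eq_single_of_mem m (Finset.mem_range.mpr (by omega))
      (fun k _ hkm => if_neg (by omega)), if_pos rfl]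
    rw [show ((2 * m : ℕ) : ℤ) - 1 - 2 * (m : ℤ) = -1 by push_cast; ring, zpow_neg_one]
    rw [show (2 * m) / 2 = m from by omega]
    simp only [hB]
    rw [show 2 * m - m = m from by omega]
    -- auxiliary facts
    have hfacne : ((m.factorial : ℂ)) ≠ 0 := Nat.cast_ne_zero.mpr (Nat.factorial_ne_zero m)
    have h2mne : ((2 : ℂ) ^ m) ≠ 0 := pow_ne_zero m two_ne_zero
    have hinv : (a + b) / (2 * a * b) = c⁻¹ := by
      rw [hcdef, inv_div]
    have base : d ^ 2 * (a * b / c ^ 2) ^ 2 = (a - b) ^ 2 * (4 : ℂ)⁻¹ * (c ^ 2)⁻¹ := by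
      rw [hcdef, hddef]
      have h4 : (4 : ℂ) ≠ 0 := by norm_num
      field_simp
      ring
    have e1 : (-d ^ 2) ^ m * (a * b / c ^ 2) ^ (2 * m)
        = (-1) ^ m * (((a - b) ^ 2) ^ m * ((4 : ℂ)⁻¹) ^ m * ((c ^ 2)⁻¹) ^ m) := by
      rw [neg_pow, pow_mul, mul_assoc, ← mul_pow, base, mul_pow, mul_pow]
    have ecinv : (c⁻¹) ^ (2 * m + 1) = ((c ^ 2)⁻¹) ^ m * c⁻¹ := by
      rw [pow_succ, pow_mul, ← inv_pow]
    have eab : (a - b) ^ (2 * m) = ((a - b) ^ 2) ^ m := pow_mul _ 2 m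
    have echoose : (((2 * m).choose m : ℂ)) * (m.factorial : ℂ) * (m.factorial : ℂ)
        = ((2 * m).factorial : ℂ) := by
      have h0 := Nat.choose_mul_factorial_mul_factorial (show m ≤ 2 * m by omega)
      rw [show 2 * m - m = m from by omega] at h0
      exact_mod_cast congrArg (Nat.cast : ℕ → ℂ) h0
    have eP : (∏ i ∈ Finset.range m, (2 * (i : ℂ) + 1))
        = ((2 * m).factorial : ℂ) / ((2 : ℂ) ^ m * (m.factorial : ℂ)) := by
      have h0 := congrArg (Nat.cast : ℕ → ℂ) (doublefac m)
      push_cast at h0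
      field_simp
      linear_combination h0
    have e4 : ((4 : ℂ)⁻¹) ^ m = (((2 : ℂ) ^ m) ^ 2)⁻¹ := by
      rw [inv_pow, ← pow_mul, mul_comm m 2, pow_mul]
      norm_num
    rw [hinv, eP, ecinv, eab, mul_assoc ((((2 * m).choose m : ℕ)) : ℂ) _ _, e1, e4]
    have key2 : ((2 * m).factorial : ℂ) * (((2 * m).choose m : ℕ) : ℂ)
          * ((((2 : ℂ) ^ m) ^ 2)⁻¹)
        = (((2 * m).factorial : ℂ) / ((2 : ℂ) ^ m * (m.factorial : ℂ))) ^ 2 := by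
      rw [div_pow, mul_pow,
        eq_div_iff (mul_ne_zero (pow_ne_zero 2 h2mne) (pow_ne_zero 2 hfacne))]
      have hinv2 : ((((2 : ℂ) ^ m) ^ 2)⁻¹) * (((2 : ℂ) ^ m) ^ 2) = 1 :=
        inv_mul_cancel₀ (pow_ne_zero 2 h2mne)
      linear_combination (((2 * m).factorial : ℂ)) * (((2 * m).choose m : ℕ) : ℂ)
          * ((m.factorial : ℂ)) ^ 2 * hinv2 + (((2 * m).factorial : ℂ)) * echoose
    rw [← key2]
    ring
  · rw [if_neg hev]
    refine Finset.sum_eq_zero fun k _ => if_neg fun h => hev ?_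
    exact ⟨k, by omega⟩
end
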